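/- arXiv:2601.18180 — 5 statements merged into one kernel-verified Lean document; each statement's English description precedes it below -/
import Mathlib

section
/- Let C = (G, ℓ) be a tropical curve with connected graph G having n = |L| ≥ 2 leaves. Then the space Ω_0(C) of exact 1-forms on C has real dimension n - 1. -/
/-- A graph in the sense of the paper: finite sets of vertices, oriented edges
(with fixed-point-free reversal involution and target map) and leaves (with
attachment map), together with a positive, reversal-invariant length function. -/
structure TropCurve where
  V : Type
  E : Type
  L : Type
  fintV : Fintype V
  fintE : Fintype E
  fintL : Fintype L
  decV : DecidableEq V
  decE : DecidableEq E
  decL : DecidableEq L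
  /-- edge reversal `e ↦ -e` -/
  rev : E → E
  rev_invol : ∀ e, rev (rev e) = e
  rev_ne : ∀ e, rev e ≠ e
  /-- target vertex of an oriented edge -/
  tgt : E → V
  /-- vertex to which a leaf is attached -/
  leafV : L → V
  /-- length function ℓ -/
  len : E → ℝ
  len_pos : ∀ e, 0 < len e
  len_rev : ∀ e, len (rev e) = len e

attribute [instance] TropCurve.fintV TropCurve.fintE TropCurve.fintL
  TropCurve.decV TropCurve.decE TropCurve.decL

namespace TropCurve

variable (C : TropCurve)

/-- The vertex `v(h)` attached to a half-edge `h ∈ E ⊔ L`. -/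
def vert : C.E ⊕ C.L → C.V := Sum.elim C.tgt C.leafV

/-- A 1-form on the tropical curve: `w(-e) = -w(e)` and the balance condition
at every vertex. -/
def IsOneForm (w : C.E ⊕ C.L → ℝ) : Prop :=
  (∀ e : C.E, w (Sum.inl (C.rev e)) = - w (Sum.inl e)) ∧
  (∀ p : C.V, ∑ h : C.E ⊕ C.L, (if C.vert h = p then w h else 0) = 0)

/-- A path: a finite sequence of oriented edges `h_1 ⋯ h_n` with
`v(h_i) = v(-h_{i+1})`. -/
def IsPath (ρ : List C.E) : Prop :=
  ∀ i : ℕ, (h : i + 1 < ρ.length) →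
    C.tgt (ρ.get ⟨i, Nat.lt_of_succ_lt h⟩) = C.tgt (C.rev (ρ.get ⟨i + 1, h⟩))

/-- A loop: a path with `v(h_n) = v(-h_1)`. -/
def IsLoop (ρ : List C.E) : Prop :=
  C.IsPath ρ ∧ ∀ h : ρ ≠ [], C.tgt (ρ.getLast h) = C.tgt (C.rev (ρ.head h))

/-- `∫_ρ w = Σ_j ℓ(h_j) w(h_j)`. -/
noncomputable def pathIntegral (ρ : List C.E) (w : C.E ⊕ C.L → ℝ) : ℝ :=
  ∑ i : Fin ρ.length, C.len (ρ.get i) * w (Sum.inl (ρ.get i))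

/-- A 1-form is exact if its integral along every loop vanishes. -/
def IsExact (w : C.E ⊕ C.L → ℝ) : Prop :=
  C.IsOneForm w ∧ ∀ ρ : List C.E, C.IsLoop ρ → C.pathIntegral ρ w = 0

/-- A 1-form is holomorphic if all its residues vanish. -/
def IsHolo (w : C.E ⊕ C.L → ℝ) : Prop :=
  C.IsOneForm w ∧ ∀ l : C.L, w (Sum.inr l) = 0

/-- Connectedness of the underlying graph. -/
def Connected : Prop :=
  ∀ p q : C.V, p = q ∨ ∃ ρ : List C.E, ∃ hne : ρ ≠ [],
    C.IsPath ρ ∧ C.tgt (C.rev (ρ.head hne)) = p ∧ C.tgt (ρ.getLast hne) = q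

/-- A simple loop: a nonempty loop whose underlying unoriented edges are
pairwise distinct. -/
def IsSimpleLoop (ρ : List C.E) : Prop :=
  C.IsLoop ρ ∧ ρ ≠ [] ∧ List.Pairwise (fun e e' => e ≠ e' ∧ e ≠ C.rev e') ρ

/-- The dual function `w^ρ` of a loop `ρ`. -/
noncomputable def dualForm (ρ : List C.E) : C.E ⊕ C.L → ℝ :=
  fun h => match h with
  | Sum.inl e => if e ∈ ρ then 1 else if C.rev e ∈ ρ then -1 else 0
  | Sum.inr _ => 0

/-- A simple path from the leaf `l₁` to the leaf `l₂`. -/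
def IsSimplePathBetween (ρ : List C.E) (l₁ l₂ : C.L) : Prop :=
  C.IsPath ρ ∧ List.Pairwise (fun e e' => e ≠ e' ∧ e ≠ C.rev e') ρ ∧
  (∀ hne : ρ ≠ [],
    C.tgt (C.rev (ρ.head hne)) = C.leafV l₁ ∧ C.tgt (ρ.getLast hne) = C.leafV l₂) ∧
  (ρ = [] → C.leafV l₁ = C.leafV l₂)

/-- The dual function `w^ρ` of a simple path `ρ` from `l₁` to `l₂`. -/
noncomputable def dualPathForm (ρ : List C.E) (l₁ l₂ : C.L) : C.E ⊕ C.L → ℝ :=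
  fun h => match h with
  | Sum.inl e => if e ∈ ρ then 1 else if C.rev e ∈ ρ then -1 else 0
  | Sum.inr l => if l = l₁ then 1 else if l = l₂ then -1 else 0

/-- The edge pairing `⟨w, w'⟩ = (1/2) Σ_{e ∈ E} ℓ(e) w(e) w'(e)`. -/
noncomputable def pairing (w w' : C.E ⊕ C.L → ℝ) : ℝ :=
  (1 / 2) * ∑ e : C.E, C.len e * w (Sum.inl e) * w' (Sum.inl e)

/-- The space `Ω(C)` of 1-forms, as a submodule of the functions on `E ⊔ L`. -/
noncomputable def Omega : Submodule ℝ (C.E ⊕ C.L → ℝ) where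
  carrier := {w | C.IsOneForm w}
  zero_mem' := by
    refine ⟨fun e => by simp, fun p => ?_⟩
    simp
  add_mem' := by
    rintro a b ⟨ha1, ha2⟩ ⟨hb1, hb2⟩
    refine ⟨fun e => ?_, fun p => ?_⟩
    · have h1 := ha1 e
      have h2 := hb1 e
      simp only [Pi.add_apply] at h1 h2 ⊢
      linarith
    · have : (∑ h : C.E ⊕ C.L, if C.vert h = p then (a + b) h else 0)
          = (∑ h : C.E ⊕ C.L, if C.vert h = p then a h else 0)
            + (∑ h : C.E ⊕ C.L, if C.vert h = p then b h else 0) := by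
        rw [← Finset.sum_add_distrib]
        refine Finset.sum_congr rfl fun h _ => ?_
        by_cases hh : C.vert h = p <;> simp [hh]
      rw [this, ha2 p, hb2 p, add_zero]
  smul_mem' := by
    rintro c a ⟨ha1, ha2⟩
    refine ⟨fun e => ?_, fun p => ?_⟩
    · have h1 := ha1 e
      simp only [Pi.smul_apply, smul_eq_mul] at h1 ⊢
      rw [h1]; ring
    · have : (∑ h : C.E ⊕ C.L, if C.vert h = p then (c • a) h else 0)
          = c * (∑ h : C.E ⊕ C.L, if C.vert h = p then a h else 0) := by
        rw [Finset.mul_sum]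
        refine Finset.sum_congr rfl fun h _ => ?_
        by_cases hh : C.vert h = p <;> simp [hh]
      rw [this, ha2 p, mul_zero]

lemma pathIntegral_add (ρ : List C.E) (a b : C.E ⊕ C.L → ℝ) :
    C.pathIntegral ρ (a + b) = C.pathIntegral ρ a + C.pathIntegral ρ b := by
  simp [pathIntegral, ← Finset.sum_add_distrib, mul_add]

lemma pathIntegral_smul (ρ : List C.E) (c : ℝ) (a : C.E ⊕ C.L → ℝ) :
    C.pathIntegral ρ (c • a) = c * C.pathIntegral ρ a := by
  simp [pathIntegral, Finset.mul_sum]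
  refine Finset.sum_congr rfl fun i _ => by ring

/-- The space `Ω_0(C)` of exact 1-forms. -/
noncomputable def Omega0 : Submodule ℝ (C.E ⊕ C.L → ℝ) where
  carrier := {w | C.IsExact w}
  zero_mem' := by
    refine ⟨(C.Omega).zero_mem, fun ρ _ => ?_⟩
    simp [pathIntegral]
  add_mem' := by
    rintro a b ⟨ha1, ha2⟩ ⟨hb1, hb2⟩
    exact ⟨(C.Omega).add_mem ha1 hb1,
      fun ρ hρ => by rw [C.pathIntegral_add, ha2 ρ hρ, hb2 ρ hρ, add_zero]⟩
  smul_mem' := by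
    rintro c a ⟨ha1, ha2⟩
    exact ⟨(C.Omega).smul_mem c ha1,
      fun ρ hρ => by rw [C.pathIntegral_smul, ha2 ρ hρ, mul_zero]⟩

/-- The space `Ω_H(C)` of holomorphic 1-forms. -/
noncomputable def OmegaH : Submodule ℝ (C.E ⊕ C.L → ℝ) where
  carrier := {w | C.IsHolo w}
  zero_mem' := ⟨(C.Omega).zero_mem, fun l => rfl⟩
  add_mem' := by
    rintro a b ⟨ha1, ha2⟩ ⟨hb1, hb2⟩
    exact ⟨(C.Omega).add_mem ha1 hb1,
      fun l => by simp [Pi.add_apply, ha2 l, hb2 l]⟩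
  smul_mem' := by
    rintro c a ⟨ha1, ha2⟩
    exact ⟨(C.Omega).smul_mem c ha1,
      fun l => by simp [Pi.smul_apply, ha2 l]⟩

end TropCurve

namespace TropCurve

variable (C : TropCurve)

lemma sum_rev (g : C.E → ℝ) : ∑ e, g (C.rev e) = ∑ e, g e := by
  have hinv : Function.Involutive C.rev := C.rev_invol
  have h := Equiv.sum_comp hinv.toPerm g
  simpa [Function.Involutive.coe_toPerm] using h

lemma sum_skew {g : C.E → ℝ} (h : ∀ e, g (C.rev e) = - g e) : ∑ e, g e = 0 := by
  have h1 : ∑ e, g (C.rev e) = ∑ e, g e := C.sum_rev g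
  have h2 : ∑ e, g (C.rev e) = - ∑ e, g e := by
    rw [← Finset.sum_neg_distrib]
    exact Finset.sum_congr rfl fun e _ => h e
  linarith

lemma balance_split {w : C.E ⊕ C.L → ℝ} (hw : C.IsOneForm w) (p : C.V) :
    (∑ e : C.E, if C.tgt e = p then w (Sum.inl e) else 0)
      + (∑ l : C.L, if C.leafV l = p then w (Sum.inr l) else 0) = 0 := by
  have h := hw.2 p
  rw [Fintype.sum_sum_type] at h
  exact h

lemma sum_residues {w : C.E ⊕ C.L → ℝ} (hw : C.IsOneForm w) :
    ∑ l, w (Sum.inr l) = 0 := by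
  have h1 : ∑ p : C.V, (∑ h : C.E ⊕ C.L, if C.vert h = p then w h else 0) = 0 :=
    Finset.sum_eq_zero fun p _ => hw.2 p
  rw [Finset.sum_comm] at h1
  have h2 : ∀ h : C.E ⊕ C.L, (∑ p : C.V, if C.vert h = p then w h else 0) = w h := by
    intro h
    rw [Finset.sum_ite_eq]
    simp
  simp only [h2] at h1
  rw [Fintype.sum_sum_type] at h1
  have h3 : ∑ e : C.E, w (Sum.inl e) = 0 := C.sum_skew fun e => hw.1 e
  linarith

lemma exists_next {w : C.E ⊕ C.L → ℝ} (hw : C.IsOneForm w)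
    (hres : ∀ l, w (Sum.inr l) = 0) {e : C.E} (he : 0 < w (Sum.inl e)) :
    ∃ e', C.tgt (C.rev e') = C.tgt e ∧ 0 < w (Sum.inl e') := by
  have hb := C.balance_split hw (C.tgt e)
  have hl : (∑ l : C.L, if C.leafV l = C.tgt e then w (Sum.inr l) else 0) = 0 :=
    Finset.sum_eq_zero fun l _ => by simp [hres l]
  rw [hl, add_zero] at hb
  by_contra hcon
  push_neg at hcon
  have hnn : ∀ e' ∈ (Finset.univ : Finset C.E),
      (0:ℝ) ≤ (if C.tgt e' = C.tgt e then w (Sum.inl e') else 0) := by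
    intro e' _
    by_cases h : C.tgt e' = C.tgt e
    · rw [if_pos h]
      have h1 := hcon (C.rev e') (by rw [C.rev_invol]; exact h)
      have h2 := hw.1 e'
      linarith
    · rw [if_neg h]
  have h0 := (Finset.sum_eq_zero_iff_of_nonneg hnn).mp hb e (Finset.mem_univ e)
  rw [if_pos rfl] at h0
  linarith

noncomputable def nextEdge (w : C.E ⊕ C.L → ℝ) (e : C.E) : C.E :=
  if h : ∃ e', C.tgt (C.rev e') = C.tgt e ∧ 0 < w (Sum.inl e') then h.choose else e

lemma nextEdge_spec {w : C.E ⊕ C.L → ℝ} {e : C.E}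
    (h : ∃ e', C.tgt (C.rev e') = C.tgt e ∧ 0 < w (Sum.inl e')) :
    C.tgt (C.rev (C.nextEdge w e)) = C.tgt e ∧ 0 < w (Sum.inl (C.nextEdge w e)) := by
  rw [nextEdge, dif_pos h]
  exact h.choose_spec

lemma getLast_get' {α : Type _} (ρ : List α) (h : ρ ≠ []) :
    ρ.getLast h = ρ.get ⟨ρ.length - 1, by have := List.length_pos_iff.mpr h; omega⟩ := by
  rw [List.getLast_eq_getElem]
  rfl

lemma head_get' {α : Type _} (ρ : List α) (hne : ρ ≠ []) (h0 : 0 < ρ.length) :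
    ρ.head hne = ρ.get ⟨0, h0⟩ := by
  rw [List.head_eq_getElem]
  rfl

lemma walk_no_loop {w : C.E ⊕ C.L → ℝ} (hw : C.IsExact w) {a : ℕ → C.E}
    (hpos : ∀ k, 0 < w (Sum.inl (a k)))
    (hstep : ∀ k, C.tgt (C.rev (a (k + 1))) = C.tgt (a k))
    (x y : ℕ) (hlt : x < y) (hfe : a x = a y) : False := by
  set n := y - x with hn
  have hn0 : 0 < n := by omega
  set ρ : List C.E := List.ofFn (fun m : Fin n => a (x + m)) with hρ
  have hlen : ρ.length = n := by simp [hρ]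
  have hlen0 : 0 < ρ.length := by omega
  have hne : ρ ≠ [] := List.length_pos_iff.mp hlen0
  have hget : ∀ (m : ℕ) (hm : m < ρ.length), ρ.get ⟨m, hm⟩ = a (x + m) := by
    intro m hm
    simp [hρ, List.get_ofFn]
  have hpath : C.IsPath ρ := by
    intro i h
    rw [hget i (Nat.lt_of_succ_lt h), hget (i + 1) h, ← Nat.add_assoc]
    exact (hstep (x + i)).symm
  have hloop : C.IsLoop ρ := by
    refine ⟨hpath, fun h => ?_⟩
    have h1 : ρ.getLast h = a (x + (ρ.length - 1)) := by
      rw [getLast_get', hget (ρ.length - 1) (by omega)]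
    have h2 : ρ.head h = a x := by
      rw [head_get' ρ h hlen0, hget 0 hlen0, Nat.add_zero]
    rw [h1, h2, hfe]
    have hy : y = (x + (ρ.length - 1)) + 1 := by omega
    rw [hy]
    exact (hstep (x + (ρ.length - 1))).symm
  have hint := hw.2 ρ hloop
  have hpos' : 0 < C.pathIntegral ρ w := by
    rw [pathIntegral]
    apply Finset.sum_pos
    · intro i _
      apply mul_pos (C.len_pos _)
      have : ρ.get i = a (x + ↑i) := by
        rw [← hget ↑i i.isLt]
      rw [this]
      exact hpos _
    · exact ⟨⟨0, hlen0⟩, Finset.mem_univ _⟩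
  linarith

lemma exact_holo_zero {w : C.E ⊕ C.L → ℝ} (hw : C.IsExact w)
    (hres : ∀ l, w (Sum.inr l) = 0) : w = 0 := by
  have key : ∀ e : C.E, ¬ (0 < w (Sum.inl e)) := by
    intro e₀ he₀
    set a : ℕ → C.E := fun k => (C.nextEdge w)^[k] e₀ with ha
    have hpos : ∀ k, 0 < w (Sum.inl (a k)) := by
      intro k
      induction k with
      | zero => exact he₀
      | succ n ih =>
        have hex := C.exists_next hw.1 hres ih
        have hs := C.nextEdge_spec hex
        simpa [ha, Function.iterate_succ_apply'] using hs.2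
    have hstep : ∀ k, C.tgt (C.rev (a (k + 1))) = C.tgt (a k) := by
      intro k
      have hex := C.exists_next hw.1 hres (hpos k)
      have hs := C.nextEdge_spec hex
      simpa [ha, Function.iterate_succ_apply'] using hs.1
    obtain ⟨x, y, hxy, hfe⟩ := Finite.exists_ne_map_eq_of_infinite a
    rcases Nat.lt_or_ge x y with hlt | hge
    · exact C.walk_no_loop hw hpos hstep x y hlt hfe
    · have hlt : y < x := by omega
      exact C.walk_no_loop hw hpos hstep y x hlt hfe.symm
  funext h
  cases h with
  | inl e =>
    have h1 := key e
    have h2 := key (C.rev e)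
    rw [hw.1.1 e] at h2
    show w (Sum.inl e) = 0
    push_neg at h1 h2
    linarith
  | inr l =>
    show w (Sum.inr l) = 0
    exact hres l

noncomputable def dEdge (f : C.V → ℝ) (e : C.E) : ℝ :=
  (f (C.tgt e) - f (C.tgt (C.rev e))) / C.len e

lemma dEdge_rev (f : C.V → ℝ) (e : C.E) : C.dEdge f (C.rev e) = - C.dEdge f e := by
  rw [dEdge, dEdge, C.rev_invol, C.len_rev]
  ring

noncomputable def lap : (C.V → ℝ) →ₗ[ℝ] (C.V → ℝ) where
  toFun f := fun p => ∑ e : C.E, if C.tgt e = p then C.dEdge f e else 0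
  map_add' f g := by
    funext p
    show (∑ e : C.E, if C.tgt e = p then C.dEdge (f + g) e else 0)
        = (∑ e : C.E, if C.tgt e = p then C.dEdge f e else 0)
          + (∑ e : C.E, if C.tgt e = p then C.dEdge g e else 0)
    rw [← Finset.sum_add_distrib]
    refine Finset.sum_congr rfl fun e _ => ?_
    by_cases h : C.tgt e = p
    · simp only [if_pos h, dEdge, Pi.add_apply]
      ring
    · simp [h]
  map_smul' c f := by
    funext p
    show (∑ e : C.E, if C.tgt e = p then C.dEdge (c • f) e else 0)
        = c * ∑ e : C.E, if C.tgt e = p then C.dEdge f e else 0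
    rw [Finset.mul_sum]
    refine Finset.sum_congr rfl fun e _ => ?_
    by_cases h : C.tgt e = p
    · simp only [if_pos h, dEdge, Pi.smul_apply, smul_eq_mul]
      ring
    · simp [h]

lemma lap_apply (f : C.V → ℝ) (p : C.V) :
    C.lap f p = ∑ e : C.E, if C.tgt e = p then C.dEdge f e else 0 := rfl

lemma lap_pair (f g : C.V → ℝ) :
    ∑ p, C.lap f p * g p = ∑ e, C.dEdge f e * g (C.tgt e) := by
  have h1 : ∀ p, C.lap f p * g p
      = ∑ e : C.E, if C.tgt e = p then C.dEdge f e * g p else 0 := by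
    intro p
    rw [lap_apply, Finset.sum_mul]
    refine Finset.sum_congr rfl fun e _ => ?_
    by_cases h : C.tgt e = p <;> simp [h]
  simp only [h1]
  rw [Finset.sum_comm]
  refine Finset.sum_congr rfl fun e _ => ?_
  rw [Finset.sum_ite_eq]
  simp

lemma sum_lap (f : C.V → ℝ) : ∑ p, C.lap f p = 0 := by
  have h := C.lap_pair f (fun _ => 1)
  simp only [mul_one] at h
  rw [h]
  exact C.sum_skew (C.dEdge_rev f)

lemma lap_quad (f : C.V → ℝ) :
    2 * (∑ p, C.lap f p * f p) = ∑ e, C.len e * (C.dEdge f e)^2 := by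
  rw [C.lap_pair f f]
  have h1 : ∑ e, C.dEdge f e * f (C.tgt e)
      = ∑ e, (- C.dEdge f e) * f (C.tgt (C.rev e)) := by
    rw [← C.sum_rev (fun e => C.dEdge f e * f (C.tgt e))]
    refine Finset.sum_congr rfl fun e _ => ?_
    rw [C.dEdge_rev]
  calc 2 * ∑ e, C.dEdge f e * f (C.tgt e)
      = ∑ e, C.dEdge f e * f (C.tgt e)
        + ∑ e, (- C.dEdge f e) * f (C.tgt (C.rev e)) := by rw [← h1]; ring
    _ = ∑ e, C.dEdge f e * (f (C.tgt e) - f (C.tgt (C.rev e))) := by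
        rw [← Finset.sum_add_distrib]
        exact Finset.sum_congr rfl fun e _ => by ring
    _ = ∑ e, C.len e * (C.dEdge f e)^2 := by
        refine Finset.sum_congr rfl fun e _ => ?_
        have hne : C.len e ≠ 0 := ne_of_gt (C.len_pos e)
        rw [dEdge]
        field_simp

lemma lap_ker_const {f : C.V → ℝ} (hf : C.lap f = 0) :
    ∀ e, f (C.tgt e) = f (C.tgt (C.rev e)) := by
  have h0 : ∑ e, C.len e * (C.dEdge f e)^2 = 0 := by
    rw [← C.lap_quad]
    simp [hf]
  have hnn : ∀ e ∈ (Finset.univ : Finset C.E), (0:ℝ) ≤ C.len e * (C.dEdge f e)^2 :=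
    fun e _ => mul_nonneg (le_of_lt (C.len_pos e)) (sq_nonneg _)
  intro e
  have he := (Finset.sum_eq_zero_iff_of_nonneg hnn).mp h0 e (Finset.mem_univ e)
  have hd : C.dEdge f e = 0 := by
    rcases mul_eq_zero.mp he with h | h
    · exact absurd h (ne_of_gt (C.len_pos e))
    · exact pow_eq_zero_iff (by norm_num) |>.mp h
  rw [dEdge, div_eq_zero_iff] at hd
  rcases hd with h | h
  · linarith [sub_eq_zero.mp h]
  · exact absurd h (ne_of_gt (C.len_pos e))

lemma const_of_edge_const (hconn : C.Connected) {f : C.V → ℝ}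
    (hf : ∀ e, f (C.tgt e) = f (C.tgt (C.rev e))) (p q : C.V) : f p = f q := by
  rcases hconn p q with h | ⟨ρ, hne, hpath, hhead, hlast⟩
  · rw [h]
  · have hlen : 0 < ρ.length := List.length_pos_iff.mpr hne
    have key : ∀ m (hm : m < ρ.length), f (C.tgt (ρ.get ⟨m, hm⟩)) = f p := by
      intro m
      induction m with
      | zero =>
        intro hm
        rw [hf, ← head_get' ρ hne hm, hhead]
      | succ k ih =>
        intro hm
        rw [hf, ← hpath k hm]
        exact ih (Nat.lt_of_succ_lt hm)
    rw [← hhead, ← hf, head_get' ρ hne hlen, key 0 hlen, ← hlast,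
      getLast_get', key (ρ.length - 1) (by omega)]

end TropCurve

noncomputable def sumF (ι : Type) [Fintype ι] : (ι → ℝ) →ₗ[ℝ] ℝ where
  toFun f := ∑ i, f i
  map_add' f g := Finset.sum_add_distrib
  map_smul' c f := by simp [Finset.mul_sum]

lemma finrank_ker_sumF (ι : Type) [Fintype ι] [Nonempty ι] :
    Module.finrank ℝ (LinearMap.ker (sumF ι)) = Fintype.card ι - 1 := by
  classical
  have hsurj : Function.Surjective (sumF ι) := by
    intro c
    obtain ⟨i₀⟩ := (inferInstance : Nonempty ι)
    refine ⟨fun i => if i₀ = i then c else 0, ?_⟩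
    show (∑ i, if i₀ = i then c else 0) = c
    rw [Finset.sum_ite_eq]
    simp
  have h1 := LinearMap.finrank_range_add_finrank_ker (sumF ι)
  rw [LinearMap.range_eq_top.mpr hsurj, finrank_top, Module.finrank_self,
    Module.finrank_fintype_fun_eq_card] at h1
  omega

namespace TropCurve

variable (C : TropCurve)

lemma lap_surj (hconn : C.Connected) [Nonempty C.V] {g : C.V → ℝ}
    (hg : ∑ p, g p = 0) : ∃ f, C.lap f = g := by
  classical
  have hrange_le : LinearMap.range C.lap ≤ LinearMap.ker (sumF C.V) := by
    rintro _ ⟨f, rfl⟩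
    exact C.sum_lap f
  obtain ⟨p₀⟩ := (inferInstance : Nonempty C.V)
  have hker_le : LinearMap.ker C.lap ≤ Submodule.span ℝ {(fun _ => 1 : C.V → ℝ)} := by
    intro f hf
    have hconst := C.const_of_edge_const hconn (C.lap_ker_const (LinearMap.mem_ker.mp hf))
    rw [Submodule.mem_span_singleton]
    exact ⟨f p₀, by funext p; simp [hconst p p₀]⟩
  have hone : (fun _ => (1:ℝ) : C.V → ℝ) ≠ 0 := by
    intro h
    have := congrFun h p₀
    simpa using this
  have h1 : Module.finrank ℝ (LinearMap.ker C.lap) ≤ 1 := by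
    calc Module.finrank ℝ (LinearMap.ker C.lap)
        ≤ Module.finrank ℝ (Submodule.span ℝ {(fun _ => 1 : C.V → ℝ)}) :=
          Submodule.finrank_mono hker_le
      _ = 1 := finrank_span_singleton hone
  have h2 := LinearMap.finrank_range_add_finrank_ker C.lap
  rw [Module.finrank_fintype_fun_eq_card] at h2
  have h4 := finrank_ker_sumF C.V
  have heq : LinearMap.range C.lap = LinearMap.ker (sumF C.V) :=
    Submodule.eq_of_le_of_finrank_le hrange_le (by omega)
  have hmem : g ∈ LinearMap.ker (sumF C.V) := hg
  rw [← heq] at hmem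
  exact hmem

noncomputable def potForm (f : C.V → ℝ) (r : C.L → ℝ) : C.E ⊕ C.L → ℝ :=
  Sum.elim (C.dEdge f) r

lemma potForm_oneForm {f : C.V → ℝ} {r : C.L → ℝ}
    (hbal : ∀ p, C.lap f p + (∑ l, if C.leafV l = p then r l else 0) = 0) :
    C.IsOneForm (C.potForm f r) := by
  constructor
  · intro e
    exact C.dEdge_rev f e
  · intro p
    rw [Fintype.sum_sum_type]
    have h1 : (∑ e : C.E, if C.vert (Sum.inl e) = p then C.potForm f r (Sum.inl e) else 0)
        = C.lap f p := by
      rw [lap_apply]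
      rfl
    have h2 : (∑ l : C.L, if C.vert (Sum.inr l) = p then C.potForm f r (Sum.inr l) else 0)
        = ∑ l, if C.leafV l = p then r l else 0 := rfl
    rw [h1, h2]
    exact hbal p

lemma potForm_exact_int (f : C.V → ℝ) (r : C.L → ℝ) {ρ : List C.E}
    (hρ : C.IsLoop ρ) : C.pathIntegral ρ (C.potForm f r) = 0 := by
  by_cases hne : ρ = []
  · subst hne
    simp [pathIntegral]
  · have hlen : 0 < ρ.length := List.length_pos_iff.mpr hne
    set F : ℕ → ℝ := fun m =>
      if hm : m < ρ.length then f (C.tgt (C.rev (ρ.get ⟨m, hm⟩)))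
      else f (C.tgt (C.rev (ρ.head hne))) with hF
    have hterm : ∀ i : Fin ρ.length,
        C.len (ρ.get i) * C.potForm f r (Sum.inl (ρ.get i)) = F (↑i + 1) - F ↑i := by
      intro i
      have hF_i : F ↑i = f (C.tgt (C.rev (ρ.get i))) := by
        rw [hF]
        simp only [dif_pos i.isLt]
      have hF_succ : F (↑i + 1) = f (C.tgt (ρ.get i)) := by
        by_cases h : ↑i + 1 < ρ.length
        · rw [hF]
          simp only [dif_pos h]
          rw [← hρ.1 ↑i h]
        · rw [hF]
          simp only [dif_neg h]
          have h2 := hρ.2 hne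
          rw [getLast_get'] at h2
          have hi : (⟨ρ.length - 1, by omega⟩ : Fin ρ.length) = i :=
            Fin.ext (by simpa using (by omega : ρ.length - 1 = ↑i))
          rw [← h2, hi]
      rw [hF_i, hF_succ]
      have hlne : C.len (ρ.get i) ≠ 0 := ne_of_gt (C.len_pos _)
      show C.len (ρ.get i) * C.dEdge f (ρ.get i) = _
      rw [dEdge, mul_comm, div_mul_cancel₀ _ hlne]
    rw [pathIntegral]
    calc ∑ i : Fin ρ.length, C.len (ρ.get i) * C.potForm f r (Sum.inl (ρ.get i))
        = ∑ i : Fin ρ.length, (F (↑i + 1) - F ↑i) :=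
          Finset.sum_congr rfl fun i _ => hterm i
      _ = ∑ m ∈ Finset.range ρ.length, (F (m + 1) - F m) :=
          Fin.sum_univ_eq_sum_range (fun m => F (m + 1) - F m) ρ.length
      _ = F ρ.length - F 0 := Finset.sum_range_sub F ρ.length
      _ = 0 := by
          rw [hF]
          simp only [dif_neg (lt_irrefl ρ.length), dif_pos hlen]
          rw [head_get' ρ hne hlen]
          ring

end TropCurve

/-- For a tropical curve `C = (G, ℓ)` with connected graph `G`
having `n = |L| ≥ 2` leaves, the space `Ω_0(C)` of exact 1-forms has real
dimension `n - 1`. -/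
theorem finrank_omega0_eq_leaves_sub_one (C : TropCurve) (hconn : C.Connected)
    (hleaves : 2 ≤ Fintype.card C.L) :
    Module.finrank ℝ ↥C.Omega0 = Fintype.card C.L - 1 := by
  classical
  have hLne : Nonempty C.L := Fintype.card_pos_iff.mp (by omega)
  obtain ⟨l₀⟩ := hLne
  haveI : Nonempty C.L := ⟨l₀⟩
  have hVne : Nonempty C.V := ⟨C.leafV l₀⟩
  let res : ↥C.Omega0 →ₗ[ℝ] (C.L → ℝ) :=
    (LinearMap.funLeft ℝ ℝ Sum.inr).comp (C.Omega0.subtype)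
  have hinj : Function.Injective res := by
    rw [← LinearMap.ker_eq_bot]
    rw [eq_bot_iff]
    intro w hw
    have hres : ∀ l, (w : C.E ⊕ C.L → ℝ) (Sum.inr l) = 0 := by
      intro l
      exact congrFun (LinearMap.mem_ker.mp hw) l
    have h0 : (w : C.E ⊕ C.L → ℝ) = 0 := C.exact_holo_zero w.2 hres
    simpa [Submodule.mem_bot] using Subtype.ext h0
  have hrange : LinearMap.range res = LinearMap.ker (sumF C.L) := by
    apply le_antisymm
    · rintro _ ⟨w, rfl⟩
      show ∑ l, (w : C.E ⊕ C.L → ℝ) (Sum.inr l) = 0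
      exact C.sum_residues w.2.1
    · intro r hr
      have hr' : ∑ l, r l = 0 := hr
      set g : C.V → ℝ := fun p => - ∑ l, if C.leafV l = p then r l else 0 with hg
      have hgsum : ∑ p, g p = 0 := by
        show ∑ p : C.V, -(∑ l, if C.leafV l = p then r l else 0) = 0
        rw [Finset.sum_neg_distrib, neg_eq_zero, Finset.sum_comm]
        have hinner : ∀ l : C.L, (∑ p : C.V, if C.leafV l = p then r l else 0) = r l := by
          intro l
          rw [Finset.sum_ite_eq]
          simp
        simp only [hinner]
        exact hr'
      obtain ⟨f, hf⟩ := C.lap_surj hconn hgsum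
      have hbal : ∀ p, C.lap f p + (∑ l, if C.leafV l = p then r l else 0) = 0 := by
        intro p
        rw [hf]
        simp [hg]
      have h1 : C.IsOneForm (C.potForm f r) := C.potForm_oneForm hbal
      have hw : C.potForm f r ∈ C.Omega0 :=
        ⟨h1, fun ρ hρ => C.potForm_exact_int f r hρ⟩
      exact ⟨⟨C.potForm f r, hw⟩, rfl⟩
  have h2 := LinearMap.finrank_range_of_inj hinj
  rw [hrange, finrank_ker_sumF] at h2
  omega
end

section
/- Let C = (G, ℓ) be a tropical curve with connected graph G. If a 1-form w on C has all residues equal to zero and its integral along every loop of G is zero, then w = 0. In particular, any exact 1-form on C is determined by its residues: two exact 1-forms with the same residues at every leaf are equal. -/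
lemma TropCurve.exists_next_s6 (C : TropCurve) (w : C.E ⊕ C.L → ℝ) (hw : C.IsOneForm w)
    (hres : ∀ l : C.L, w (Sum.inr l) = 0) (e : C.E) (he : 0 < w (Sum.inl e)) :
    ∃ e' : C.E, 0 < w (Sum.inl e') ∧ C.tgt (C.rev e') = C.tgt e := by
  by_contra hcon
  push_neg at hcon
  have hpos : ∀ h : C.E ⊕ C.L, C.vert h = C.tgt e → 0 ≤ w h := by
    intro h hh
    by_contra hneg
    push_neg at hneg
    match h with
    | Sum.inr l => rw [hres l] at hneg; exact lt_irrefl _ hneg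
    | Sum.inl e'' =>
      have h1 : 0 < w (Sum.inl (C.rev e'')) := by
        rw [hw.1 e'']; linarith
      have h2 : C.tgt (C.rev (C.rev e'')) = C.tgt e := by
        rw [C.rev_invol]; exact hh
      exact (hcon _ h1) h2
  have hb := hw.2 (C.tgt e)
  have hle : w (Sum.inl e) ≤ ∑ h : C.E ⊕ C.L, (if C.vert h = C.tgt e then w h else 0) := by
    have := Finset.single_le_sum
      (f := fun h : C.E ⊕ C.L => if C.vert h = C.tgt e then w h else 0)
      (fun h _ => by by_cases hh : C.vert h = C.tgt e <;> simp [hh, hpos h])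
      (Finset.mem_univ (Sum.inl e : C.E ⊕ C.L))
    simpa [TropCurve.vert] using this
  linarith

lemma TropCurve.key (C : TropCurve) (w : C.E ⊕ C.L → ℝ) (hw : C.IsOneForm w)
    (hres : ∀ l : C.L, w (Sum.inr l) = 0)
    (hloop : ∀ ρ : List C.E, C.IsLoop ρ → C.pathIntegral ρ w = 0) : w = 0 := by
  by_contra hne
  have : ∃ h : C.E ⊕ C.L, w h ≠ 0 := by
    by_contra hall
    push_neg at hall
    exact hne (funext fun h => hall h)
  obtain ⟨h0, hh0⟩ := this
  have : ∃ e0 : C.E, 0 < w (Sum.inl e0) := by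
    match h0 with
    | Sum.inr l => exact absurd (hres l) hh0
    | Sum.inl e =>
      rcases lt_or_gt_of_ne hh0 with h | h
      · exact ⟨C.rev e, by rw [hw.1 e]; linarith⟩
      · exact ⟨e, h⟩
  obtain ⟨e0, he0⟩ := this
  have hstep : ∀ x : {e : C.E // 0 < w (Sum.inl e)},
      ∃ y : {e : C.E // 0 < w (Sum.inl e)}, C.tgt (C.rev y.1) = C.tgt x.1 := by
    intro x
    obtain ⟨e', h1, h2⟩ := C.exists_next_s6 w hw hres x.1 x.2
    exact ⟨⟨e', h1⟩, h2⟩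
  choose g hg using hstep
  set f : ℕ → {e : C.E // 0 < w (Sum.inl e)} := fun n => g^[n] ⟨e0, he0⟩ with hfdef
  have hf : ∀ n, C.tgt (C.rev (f (n + 1)).1) = C.tgt (f n).1 := by
    intro n
    have : f (n + 1) = g (f n) := Function.iterate_succ_apply' g n _
    rw [this]; exact hg (f n)
  obtain ⟨x, y, hxy, hfeq⟩ := Finite.exists_ne_map_eq_of_infinite f
  -- wlog x < y
  obtain ⟨x, y, hlt, hfeq⟩ : ∃ x y : ℕ, x < y ∧ f x = f y := by
    rcases lt_or_gt_of_ne hxy with h | h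
    · exact ⟨x, y, h, hfeq⟩
    · exact ⟨y, x, h, hfeq.symm⟩
  set n := y - x with hn
  have hn0 : 0 < n := Nat.sub_pos_of_lt hlt
  set ρ : List C.E := List.ofFn (fun k : Fin n => (f (x + k)).1) with hρ
  have hlen : ρ.length = n := List.length_ofFn
  have hget : ∀ i : Fin ρ.length, ρ.get i = (f (x + i)).1 := by
    intro i
    rw [List.get_of_eq hρ, List.get_ofFn]
    rfl
  have hρne : ρ ≠ [] := by
    intro hc
    have h0 : n = 0 := by rw [← hlen, hc]; rfl
    omega
  have hpath : C.IsPath ρ := by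
    intro i hi
    rw [hget, hget]
    exact (hf (x + i)).symm
  have hloopρ : C.IsLoop ρ := by
    refine ⟨hpath, fun _ => ?_⟩
    have h1 : ρ.getLast hρne = ρ.get ⟨ρ.length - 1, by omega⟩ := by
      rw [List.getLast_eq_getElem]
      rfl
    have h2 : ρ.head hρne = ρ.get ⟨0, by omega⟩ := by
      rw [List.head_eq_getElem]
      rfl
    rw [h1, h2, hget, hget]
    have hy : x + (ρ.length - 1) + 1 = y := by omega
    have := hf (x + (ρ.length - 1))
    rw [hy, ← hfeq] at this
    exact this.symm
  have hpos : 0 < C.pathIntegral ρ w := by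
    unfold TropCurve.pathIntegral
    apply Finset.sum_pos
    · intro i _
      rw [hget]
      exact mul_pos (C.len_pos _) (f (x + i)).2
    · have : 0 < ρ.length := by omega
      exact ⟨⟨0, this⟩, Finset.mem_univ _⟩
  have := hloop ρ hloopρ
  linarith

/-- On a tropical curve `C = (G, ℓ)` with connected graph `G`:
a 1-form with all residues zero and all loop integrals zero is zero; in
particular, two exact 1-forms with the same residues at every leaf are equal. -/
theorem exact_oneForm_determined_by_residues (C : TropCurve) (hconn : C.Connected) :
    (∀ w : C.E ⊕ C.L → ℝ, C.IsOneForm w → (∀ l : C.L, w (Sum.inr l) = 0) →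
      (∀ ρ : List C.E, C.IsLoop ρ → C.pathIntegral ρ w = 0) → w = 0) ∧
    (∀ w w' : C.E ⊕ C.L → ℝ, C.IsExact w → C.IsExact w' →
      (∀ l : C.L, w (Sum.inr l) = w' (Sum.inr l)) → w = w') := by
  constructor
  · exact fun w hw hres hloop => C.key w hw hres hloop
  · intro w w' hw hw' hres
    have hsub : C.IsExact (w - w') := by
      have : w - w' ∈ C.Omega0 := C.Omega0.sub_mem hw hw'
      exact this
    have : w - w' = 0 := by
      refine C.key (w - w') hsub.1 (fun l => ?_) hsub.2
      simp [Pi.sub_apply, hres l]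
    exact sub_eq_zero.mp this
end

section
/- Let C = (G, ℓ) be a tropical curve with connected graph G. Then the subspaces Ω_0(C) of exact 1-forms and Ω_H(C) of holomorphic 1-forms are orthogonal with respect to the edge pairing: for every exact 1-form w and every holomorphic 1-form w' on C, ⟨w, w'⟩ = 0. -/
namespace TropCurve

variable (C : TropCurve)

lemma pathIntegral_nil (w : C.E ⊕ C.L → ℝ) : C.pathIntegral [] w = 0 := by
  simp [pathIntegral]

lemma pathIntegral_cons (e : C.E) (ρ : List C.E) (w : C.E ⊕ C.L → ℝ) :
    C.pathIntegral (e :: ρ) w = C.len e * w (Sum.inl e) + C.pathIntegral ρ w := by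
  simp [pathIntegral, Fin.sum_univ_succ]

lemma pathIntegral_append' (ρ₁ ρ₂ : List C.E) (w : C.E ⊕ C.L → ℝ) :
    C.pathIntegral (ρ₁ ++ ρ₂) w = C.pathIntegral ρ₁ w + C.pathIntegral ρ₂ w := by
  induction ρ₁ with
  | nil => simp [pathIntegral_nil]
  | cons e ρ ih => simp [pathIntegral_cons, ih]; ring

/-- The reversed path. -/
def revPath (ρ : List C.E) : List C.E := (ρ.map C.rev).reverse

lemma revPath_nil : C.revPath [] = [] := rfl

lemma revPath_cons (e : C.E) (ρ : List C.E) :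
    C.revPath (e :: ρ) = C.revPath ρ ++ [C.rev e] := by simp [revPath]

lemma revPath_ne_nil {ρ : List C.E} (h : ρ ≠ []) : C.revPath ρ ≠ [] := by
  simp [revPath, h]

lemma pathIntegral_revPath (ρ : List C.E) (w : C.E ⊕ C.L → ℝ)
    (hrev : ∀ e : C.E, w (Sum.inl (C.rev e)) = - w (Sum.inl e)) :
    C.pathIntegral (C.revPath ρ) w = - C.pathIntegral ρ w := by
  induction ρ with
  | nil => simp [revPath_nil, pathIntegral_nil]
  | cons e ρ ih =>
      rw [revPath_cons, pathIntegral_append', ih, pathIntegral_cons, pathIntegral_cons,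
        pathIntegral_nil, C.len_rev, hrev]
      ring

lemma isPath_append {ρ₁ ρ₂ : List C.E} (h1 : C.IsPath ρ₁) (h2 : C.IsPath ρ₂)
    (hj : ∀ (n1 : ρ₁ ≠ []) (n2 : ρ₂ ≠ []),
      C.tgt (ρ₁.getLast n1) = C.tgt (C.rev (ρ₂.head n2))) :
    C.IsPath (ρ₁ ++ ρ₂) := by
  intro i h
  simp only [List.get_eq_getElem] at *
  rcases lt_or_ge (i + 1) ρ₁.length with hlt | hge
  · rw [List.getElem_append_left (Nat.lt_of_succ_lt hlt), List.getElem_append_left hlt]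
    simpa using h1 i hlt
  · rcases eq_or_lt_of_le hge with heq | hlt2
    · have hi : i < ρ₁.length := by omega
      have n1 : ρ₁ ≠ [] := by intro hh; rw [hh] at hi; simp at hi
      have n2 : ρ₂ ≠ [] := by
        intro hh
        rw [hh] at h; simp at h; omega
      rw [List.getElem_append_left hi, List.getElem_append_right heq.le]
      have hlt4 : i + 1 - ρ₁.length < ρ₂.length := by
        simp only [List.length_append] at h; omega
      have e1 : ρ₁[i] = ρ₁.getLast n1 := by
        rw [List.getLast_eq_getElem]; congr 1; omega
      have e2 : ρ₂[i + 1 - ρ₁.length]'hlt4 = ρ₂.head n2 := by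
        rw [List.head_eq_getElem]; congr 1; omega
      rw [e1, e2]; exact hj n1 n2
    · have hle : ρ₁.length ≤ i := by omega
      rw [List.getElem_append_right hle, List.getElem_append_right (le_of_lt hlt2)]
      have hs : i + 1 - ρ₁.length = (i - ρ₁.length) + 1 := by omega
      have hlt3 : (i - ρ₁.length) + 1 < ρ₂.length := by
        simp only [List.length_append] at h; omega
      have := h2 (i - ρ₁.length) hlt3
      simp only [List.get_eq_getElem] at this
      convert this using 4

lemma isPath_revPath {ρ : List C.E} (h : C.IsPath ρ) : C.IsPath (C.revPath ρ) := by
  intro i hi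
  have hlen : (C.revPath ρ).length = ρ.length := by simp [revPath]
  rw [hlen] at hi
  have key : ∀ (j : ℕ) (hj : j < ρ.length),
      (C.revPath ρ).get ⟨j, by rw [hlen]; exact hj⟩ = C.rev (ρ[ρ.length - 1 - j]'(by omega)) := by
    intro j hj
    simp only [List.get_eq_getElem, revPath, List.getElem_reverse, List.getElem_map]
    congr 1
    simp
  rw [key i (by omega), key (i+1) hi]
  have hj2 : (ρ.length - 1 - (i + 1)) + 1 < ρ.length := by omega
  have hstep := h (ρ.length - 1 - (i + 1)) hj2
  simp only [List.get_eq_getElem] at hstep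
  rw [C.rev_invol]
  have hidx : ρ.length - 1 - i = ρ.length - 1 - (i + 1) + 1 := by omega
  simp only [hidx]
  exact hstep.symm

/-- `ρ` is a path from `p0` to `p`. -/
def Reaches (p0 : C.V) (ρ : List C.E) (p : C.V) : Prop :=
  C.IsPath ρ ∧ (∀ h : ρ ≠ [], C.tgt (C.rev (ρ.head h)) = p0 ∧ C.tgt (ρ.getLast h) = p) ∧
    (ρ = [] → p0 = p)

lemma reaches_nil (p0 : C.V) : C.Reaches p0 [] p0 :=
  ⟨fun i hi => by simp at hi, fun h => absurd rfl h, fun _ => rfl⟩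

lemma reaches_single (e : C.E) : C.Reaches (C.tgt (C.rev e)) [e] (C.tgt e) := by
  refine ⟨fun i hi => by simp at hi, fun h => ⟨rfl, rfl⟩, fun h => by simp at h⟩

lemma reaches_append {p0 p q : C.V} {ρ σ : List C.E}
    (h1 : C.Reaches p0 ρ p) (h2 : C.Reaches p σ q) : C.Reaches p0 (ρ ++ σ) q := by
  obtain ⟨hp1, hh1, he1⟩ := h1
  obtain ⟨hp2, hh2, he2⟩ := h2
  by_cases hρ : ρ = []
  · subst hρ
    simp only [List.nil_append]
    exact ⟨hp2, fun h => ⟨by rw [(hh2 h).1, he1 rfl], (hh2 h).2⟩,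
      fun h => (he1 rfl).trans (he2 h)⟩
  · by_cases hσ : σ = []
    · subst hσ
      simp only [List.append_nil]
      exact ⟨hp1, fun h => ⟨(hh1 h).1, by rw [(hh1 h).2]; exact he2 rfl⟩,
        fun h => absurd h hρ⟩
    · have hne : ρ ++ σ ≠ [] := by simp [hρ]
      refine ⟨C.isPath_append hp1 hp2 (fun n1 n2 => by rw [(hh1 n1).2, (hh2 n2).1]),
        fun h => ⟨?_, ?_⟩, fun h => absurd h hne⟩
      · have : (ρ ++ σ).head h = ρ.head hρ := by
          rw [List.head_append]
          simp [hρ]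
        rw [this]; exact (hh1 hρ).1
      · have : (ρ ++ σ).getLast h = σ.getLast hσ := by
          rw [List.getLast_append]
          simp [hσ]
        rw [this]; exact (hh2 hσ).2

lemma reaches_revPath {p0 p : C.V} {ρ : List C.E} (h : C.Reaches p0 ρ p) :
    C.Reaches p (C.revPath ρ) p0 := by
  obtain ⟨hp, hh, he⟩ := h
  by_cases hρ : ρ = []
  · subst hρ
    exact ⟨fun i hi => by simp [revPath] at hi, fun h => absurd rfl h,
      fun _ => (he rfl).symm⟩
  · have hne : C.revPath ρ ≠ [] := C.revPath_ne_nil hρ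
    refine ⟨C.isPath_revPath hp, fun h => ⟨?_, ?_⟩, fun h => absurd h hne⟩
    · have : (C.revPath ρ).head h = C.rev (ρ.getLast hρ) := by
        simp only [revPath]
        rw [List.head_reverse, List.getLast_map]
      rw [this, C.rev_invol]
      exact (hh hρ).2
    · have : (C.revPath ρ).getLast h = C.rev (ρ.head hρ) := by
        simp only [revPath]
        rw [List.getLast_reverse, List.head_map]
      rw [this]
      exact (hh hρ).1

lemma pathIntegral_eq_zero_of_reaches_self {w : C.E ⊕ C.L → ℝ} (hw : C.IsExact w)
    {a : C.V} {μ : List C.E} (h : C.Reaches a μ a) : C.pathIntegral μ w = 0 := by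
  by_cases hμ : μ = []
  · subst hμ; exact C.pathIntegral_nil w
  · exact hw.2 μ ⟨h.1, fun hne => by rw [(h.2.1 hne).2, (h.2.1 hne).1]⟩

end TropCurve


/-- On a tropical curve `C = (G, ℓ)` with connected graph `G`,
exact 1-forms and holomorphic 1-forms are orthogonal for the edge pairing. -/
theorem pairing_exact_holomorphic_eq_zero (C : TropCurve) (hconn : C.Connected)
    (w w' : C.E ⊕ C.L → ℝ) (hw : C.IsExact w) (hw' : C.IsHolo w') :
    C.pairing w w' = 0 := by
  classical
  rcases isEmpty_or_nonempty C.V with hV | hV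
  · have : IsEmpty C.E := ⟨fun e => hV.false (C.tgt e)⟩
    simp [TropCurve.pairing]
  · obtain ⟨p0⟩ := hV
    have hreach : ∀ p : C.V, ∃ ρ, C.Reaches p0 ρ p := by
      intro p
      rcases hconn p0 p with h | ⟨ρ, hne, hp, hs, ht⟩
      · exact ⟨[], h ▸ C.reaches_nil p0⟩
      · exact ⟨ρ, hp, fun h' => ⟨hs, ht⟩, fun h' => absurd h' hne⟩
    choose ρf hρf using hreach
    set f : C.V → ℝ := fun p => C.pathIntegral (ρf p) w with hf
    have huniq : ∀ (p : C.V) (ρ : List C.E), C.Reaches p0 ρ p →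
        C.pathIntegral ρ w = f p := by
      intro p ρ h
      have hloop := C.reaches_append h (C.reaches_revPath (hρf p))
      have h0 := C.pathIntegral_eq_zero_of_reaches_self hw hloop
      rw [C.pathIntegral_append', C.pathIntegral_revPath _ _ hw.1.1] at h0
      rw [hf]
      linarith
    have hgrad : ∀ e : C.E, C.len e * w (Sum.inl e) = f (C.tgt e) - f (C.tgt (C.rev e)) := by
      intro e
      have h1 := C.reaches_append (hρf (C.tgt (C.rev e))) (C.reaches_single e)
      have h2 := huniq _ _ h1
      rw [C.pathIntegral_append', C.pathIntegral_cons, C.pathIntegral_nil,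
        huniq _ _ (hρf (C.tgt (C.rev e)))] at h2
      linarith
    -- rewrite the pairing using the potential f
    have hS : C.pairing w w' =
        ∑ e : C.E, f (C.tgt e) * w' (Sum.inl e) := by
      rw [TropCurve.pairing]
      have : ∀ e : C.E, C.len e * w (Sum.inl e) * w' (Sum.inl e)
          = (f (C.tgt e) - f (C.tgt (C.rev e))) * w' (Sum.inl e) := by
        intro e; rw [← hgrad e]
      rw [Finset.sum_congr rfl (fun e _ => this e)]
      have hsplit : ∑ e : C.E, (f (C.tgt e) - f (C.tgt (C.rev e))) * w' (Sum.inl e)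
          = (∑ e : C.E, f (C.tgt e) * w' (Sum.inl e))
            - ∑ e : C.E, f (C.tgt (C.rev e)) * w' (Sum.inl e) := by
        rw [← Finset.sum_sub_distrib]
        exact Finset.sum_congr rfl (fun e _ => by ring)
      have hrevsum : ∑ e : C.E, f (C.tgt (C.rev e)) * w' (Sum.inl e)
          = - ∑ e : C.E, f (C.tgt e) * w' (Sum.inl e) := by
        have hinv : Function.Involutive C.rev := C.rev_invol
        rw [← Finset.sum_neg_distrib]
        refine Finset.sum_equiv hinv.toPerm (by simp) ?_
        intro e _
        simp only [Function.Involutive.coe_toPerm]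
        rw [hw'.1.1]
        ring
      rw [hsplit, hrevsum]
      ring
    rw [hS]
    -- the vertex sums vanish
    have hbal : ∀ p : C.V, ∑ e : C.E, (if C.tgt e = p then w' (Sum.inl e) else 0) = 0 := by
      intro p
      have := hw'.1.2 p
      rw [Fintype.sum_sum_type] at this
      have hleaf : ∑ l : C.L, (if C.vert (Sum.inr l) = p then w' (Sum.inr l) else 0) = 0 := by
        refine Finset.sum_eq_zero fun l _ => ?_
        rw [hw'.2 l]
        simp
      rw [hleaf, add_zero] at this
      simp only [TropCurve.vert, Sum.elim_inl] at this
      convert this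
      split_ifs with h <;> simp [h]
    have hsum : ∑ e : C.E, f (C.tgt e) * w' (Sum.inl e)
        = ∑ p : C.V, f p * ∑ e : C.E, (if C.tgt e = p then w' (Sum.inl e) else 0) := by
      have step1 : ∀ e : C.E, f (C.tgt e) * w' (Sum.inl e)
          = ∑ p : C.V, (if C.tgt e = p then f p * w' (Sum.inl e) else 0) := by
        intro e
        rw [Finset.sum_ite_eq]
        simp
      rw [Finset.sum_congr rfl (fun e _ => step1 e), Finset.sum_comm]
      refine Finset.sum_congr rfl fun p _ => ?_
      rw [Finset.mul_sum]
      refine Finset.sum_congr rfl fun e _ => ?_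
      by_cases h : C.tgt e = p <;> simp [h]
    rw [hsum]
    refine Finset.sum_eq_zero fun p _ => ?_
    rw [hbal p, mul_zero]
end

section
/- Let C = (G, ℓ) be a tropical curve with connected graph G of genus g = |E|/2 - |V| + 1, and let b_1, …, b_g be simple loops in G whose dual 1-forms w^{b_1}, …, w^{b_g} are linearly independent. Then the g × g real matrix M with entries M_{ij} = ∫_{b_j} w^{b_i} is symmetric and positive definite; in particular M is invertible. -/
namespace TropCurve

variable (C : TropCurve)

lemma simple_symm {ρ : List C.E} (h : C.IsSimpleLoop ρ) {e e' : C.E}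
    (he : e ∈ ρ) (he' : e' ∈ ρ) (hne : e ≠ e') : e ≠ C.rev e' := by
  have hsymm : Symmetric (fun e e' : C.E => e ≠ e' ∧ e ≠ C.rev e') := by
    intro a b hab
    refine ⟨hab.1.symm, fun hba => ?_⟩
    exact hab.2 (by rw [hba, C.rev_invol])
  haveI : Std.Symm (fun e e' : C.E => e ≠ e' ∧ e ≠ C.rev e') := ⟨fun _ _ hab => hsymm hab⟩
  exact ((h.2.2.forall) he he' hne).2

lemma simple_not_both {ρ : List C.E} (h : C.IsSimpleLoop ρ) {e : C.E}
    (he : e ∈ ρ) (hre : C.rev e ∈ ρ) : False := by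
  have hne : e ≠ C.rev e := (C.rev_ne e).symm
  exact (C.simple_symm h he hre hne) (C.rev_invol e).symm

lemma simple_nodup {ρ : List C.E} (h : C.IsSimpleLoop ρ) : ρ.Nodup :=
  h.2.2.imp fun hp => hp.1

lemma dualForm_rev {ρ : List C.E} (h : C.IsSimpleLoop ρ) (e : C.E) :
    C.dualForm ρ (Sum.inl (C.rev e)) = - C.dualForm ρ (Sum.inl e) := by
  unfold dualForm
  by_cases he : e ∈ ρ
  · have hre : C.rev e ∉ ρ := fun hre => C.simple_not_both h he hre
    simp [he, hre, C.rev_invol]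
  · by_cases hre : C.rev e ∈ ρ
    · simp [he, hre]
    · simp [he, hre, C.rev_invol]

lemma pathIntegral_eq_toFinset_sum (ρ : List C.E) (hnd : ρ.Nodup)
    (f : C.E → ℝ) :
    (∑ i : Fin ρ.length, f (ρ.get i)) = ∑ e ∈ ρ.toFinset, f e := by
  rw [List.sum_toFinset f hnd, ← Fin.sum_ofFn (fun i => f (ρ.get i))]
  congr 1
  rw [show (fun i => f (ρ.get i)) = f ∘ ρ.get from rfl, ← List.map_ofFn, List.ofFn_get]

lemma integral_eq_pairing {ρ : List C.E} (hρ : C.IsSimpleLoop ρ)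
    (w : C.E ⊕ C.L → ℝ)
    (hw : ∀ e, w (Sum.inl (C.rev e)) = - w (Sum.inl e)) :
    C.pathIntegral ρ w
      = (1 / 2) * ∑ e : C.E, C.len e * w (Sum.inl e) * C.dualForm ρ (Sum.inl e) := by
  set f : C.E → ℝ := fun e => C.len e * w (Sum.inl e) with hf
  have h1 : C.pathIntegral ρ w = ∑ e ∈ ρ.toFinset, f e :=
    C.pathIntegral_eq_toFinset_sum ρ (C.simple_nodup hρ) f
  set A : Finset C.E := ρ.toFinset with hA
  set B : Finset C.E := A.image C.rev with hB
  have hrevinj : Function.Injective C.rev := by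
    intro a b hab
    have := congrArg C.rev hab
    rwa [C.rev_invol, C.rev_invol] at this
  have hdisj : Disjoint A B := by
    rw [Finset.disjoint_left]
    intro a haA haB
    rcases Finset.mem_image.mp haB with ⟨x, hx, hxa⟩
    have hxρ : x ∈ ρ := List.mem_toFinset.mp hx
    have haρ : a ∈ ρ := List.mem_toFinset.mp haA
    have : C.rev a ∈ ρ := by rw [← hxa, C.rev_invol]; exact hxρ
    exact C.simple_not_both hρ haρ this
  have h2 : (∑ e : C.E, f e * C.dualForm ρ (Sum.inl e))
      = ∑ e ∈ A ∪ B, f e * C.dualForm ρ (Sum.inl e) := by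
    symm
    apply Finset.sum_subset (Finset.subset_univ _)
    intro e _ he
    rw [Finset.mem_union, not_or] at he
    have h1' : e ∉ ρ := fun h => he.1 (List.mem_toFinset.mpr h)
    have h2' : C.rev e ∉ ρ := by
      intro h
      exact he.2 (Finset.mem_image.mpr ⟨C.rev e, List.mem_toFinset.mpr h, C.rev_invol e⟩)
    simp [dualForm, h1', h2']
  have h3 : (∑ e ∈ A, f e * C.dualForm ρ (Sum.inl e)) = ∑ e ∈ A, f e := by
    apply Finset.sum_congr rfl
    intro e he
    have : e ∈ ρ := List.mem_toFinset.mp he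
    simp [dualForm, this]
  have h4 : (∑ e ∈ B, f e * C.dualForm ρ (Sum.inl e)) = ∑ e ∈ A, f e := by
    rw [hB, Finset.sum_image (fun a _ b _ h => hrevinj h)]
    apply Finset.sum_congr rfl
    intro e he
    have heρ : e ∈ ρ := List.mem_toFinset.mp he
    have hre : C.rev e ∉ ρ := fun h => C.simple_not_both hρ heρ h
    have hd : C.dualForm ρ (Sum.inl (C.rev e)) = -1 := by
      simp [dualForm, hre, C.rev_invol, heρ]
    rw [hd, hf]
    simp only [C.len_rev, hw]
    ring
  rw [h1]
  rw [show (∑ e : C.E, C.len e * w (Sum.inl e) * C.dualForm ρ (Sum.inl e))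
      = ∑ e : C.E, f e * C.dualForm ρ (Sum.inl e) from rfl, h2,
    Finset.sum_union hdisj, h3, h4]
  ring

end TropCurve

/-- Let `C = (G, ℓ)` be a tropical curve with connected graph
`G` of genus `g` (encoded by `2g + 2|V| = |E| + 2`), and let `b₁, …, b_g` be
simple loops whose dual 1-forms are linearly independent. Then the matrix
`M_{ij} = ∫_{b_j} w^{b_i}` is symmetric and positive definite; in particular
it is invertible. -/
theorem period_matrix_symm_posDef (C : TropCurve) (hconn : C.Connected) (g : ℕ)
    (hg : 2 * g + 2 * Fintype.card C.V = Fintype.card C.E + 2)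
    (b : Fin g → List C.E) (hb : ∀ i, C.IsSimpleLoop (b i))
    (hind : LinearIndependent ℝ fun i => C.dualForm (b i))
    (M : Matrix (Fin g) (Fin g) ℝ)
    (hM : ∀ i j, M i j = C.pathIntegral (b j) (C.dualForm (b i))) :
    M.IsSymm ∧ M.PosDef ∧ IsUnit M.det := by
  classical
  set v : Fin g → C.E → ℝ := fun i e => C.dualForm (b i) (Sum.inl e) with hv
  have hM' : ∀ i j, M i j = (1 / 2) * ∑ e : C.E, C.len e * v i e * v j e := by
    intro i j
    rw [hM i j, C.integral_eq_pairing (hb j) _ (C.dualForm_rev (hb i))]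
  have hsymm : M.IsSymm := by
    rw [Matrix.IsSymm]
    ext i j
    rw [Matrix.transpose_apply, hM' i j, hM' j i]
    congr 1
    exact Finset.sum_congr rfl fun e _ => by ring
  have swap3 : ∀ (F : Fin g → Fin g → C.E → ℝ),
      (∑ e : C.E, ∑ i, ∑ j, F i j e) = ∑ i, ∑ j, ∑ e : C.E, F i j e := by
    intro F
    rw [Finset.sum_comm]
    exact Finset.sum_congr rfl fun i _ => Finset.sum_comm
  have hquad : ∀ x : Fin g → ℝ, dotProduct (star x) (M.mulVec x)
      = (1 / 2) * ∑ e : C.E,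
          C.len e * (∑ i, x i * v i e) * (∑ i, x i * v i e) := by
    intro x
    rw [star_trivial]
    calc dotProduct x (M.mulVec x)
        = ∑ i, ∑ j, x i * (M i j * x j) := by
          simp [dotProduct, Matrix.mulVec, Finset.mul_sum]
      _ = ∑ i, ∑ j, ∑ e : C.E,
            (1 / 2) * (C.len e * (x i * v i e) * (x j * v j e)) := by
          refine Finset.sum_congr rfl fun i _ => Finset.sum_congr rfl fun j _ => ?_
          rw [hM' i j, Finset.mul_sum, Finset.sum_mul, Finset.mul_sum]
          exact Finset.sum_congr rfl fun e _ => by ring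
      _ = ∑ e : C.E, ∑ i, ∑ j,
            (1 / 2) * (C.len e * (x i * v i e) * (x j * v j e)) := (swap3 _).symm
      _ = (1 / 2) * ∑ e : C.E,
            C.len e * (∑ i, x i * v i e) * (∑ i, x i * v i e) := by
          rw [Finset.mul_sum]
          refine Finset.sum_congr rfl fun e _ => ?_
          rw [mul_assoc, Finset.sum_mul_sum, Finset.mul_sum, Finset.mul_sum]
          refine Finset.sum_congr rfl fun i _ => ?_
          rw [Finset.mul_sum, Finset.mul_sum]
          exact Finset.sum_congr rfl fun j _ => by ring
  have hpd : M.PosDef := by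
    rw [Matrix.posDef_iff_dotProduct_mulVec]
    constructor
    · rw [Matrix.IsHermitian]
      ext i j
      rw [Matrix.conjTranspose_apply, star_trivial]
      have h2 := congrFun (congrFun hsymm i) j
      simpa [Matrix.transpose_apply] using h2
    · intro x hx
      rw [hquad x]
      set S : C.E → ℝ := fun e => ∑ i, x i * v i e with hS
      have hex : ∃ e, S e ≠ 0 := by
        by_contra hno
        push_neg at hno
        apply hx
        have hzero : (∑ i, x i • (fun i => C.dualForm (b i)) i) = 0 := by
          funext h
          rw [Finset.sum_apply]
          cases h with
          | inl e =>
            have : (∑ i, (x i • C.dualForm (b i)) (Sum.inl e)) = S e := by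
              rw [hS]
              exact Finset.sum_congr rfl fun i _ => by
                simp [hv]
            rw [this, hno e]
            rfl
          | inr l =>
            have : ∀ i : Fin g, (x i • C.dualForm (b i)) (Sum.inr l) = 0 := by
              intro i
              simp [TropCurve.dualForm]
            rw [Finset.sum_congr rfl fun i _ => this i]
            simp
        have := Fintype.linearIndependent_iff.mp hind x hzero
        funext i
        exact this i
      obtain ⟨e0, he0⟩ := hex
      have hsum : 0 < ∑ e : C.E, C.len e * S e * S e := by
        refine Finset.sum_pos' (fun e _ => ?_) ⟨e0, Finset.mem_univ e0, ?_⟩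
        · rw [mul_assoc]
          exact mul_nonneg (C.len_pos e).le (mul_self_nonneg _)
        · rw [mul_assoc]
          exact mul_pos (C.len_pos e0) (mul_self_pos.mpr he0)
      have : (0:ℝ) < 1 / 2 := by norm_num
      exact mul_pos this hsum
  exact ⟨hsymm, hpd, isUnit_iff_ne_zero.mpr (ne_of_gt hpd.det_pos)⟩
end

section
/- Let C = (G, ℓ) be a tropical curve with connected graph G of genus g = |E|/2 - |V| + 1, and let b_1, …, b_g be simple loops in G whose dual 1-forms w^{b_1}, …, w^{b_g} are linearly independent. Then w^{b_1}, …, w^{b_g} form a basis of Ω_H(C), and the period map Ω_H(C) → ℝ^g sending a holomorphic 1-form w to (∫_{b_1} w, …, ∫_{b_g} w) is a linear isomorphism. -/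
namespace TropCurve

variable (C : TropCurve)

abbrev PW (ρ : List C.E) : Prop := List.Pairwise (fun e e' => e ≠ e' ∧ e ≠ C.rev e') ρ

lemma rev_inj : Function.Injective C.rev :=
  Function.Involutive.injective C.rev_invol

lemma pw_symm : Symmetric (fun e e' => e ≠ e' ∧ e ≠ C.rev e') := by
  intro e e' ⟨h1, h2⟩
  refine ⟨h1.symm, fun h => h2 ?_⟩
  rw [h, C.rev_invol]

lemma not_rev_mem {ρ : List C.E} (hp : C.PW ρ) {e : C.E} (he : e ∈ ρ) :
    C.rev e ∉ ρ := by
  intro hre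
  rcases eq_or_ne e (C.rev e) with h | h
  · exact C.rev_ne e h.symm
  · have := (haveI : Std.Symm (fun e e' : C.E => e ≠ e' ∧ e ≠ C.rev e') := ⟨fun _ _ h => C.pw_symm h⟩; List.Pairwise.forall hp) he hre h
    exact this.2 (by rw [C.rev_invol])

lemma mem_map_rev {ρ : List C.E} {e : C.E} : e ∈ ρ.map C.rev ↔ C.rev e ∈ ρ := by
  constructor
  · rintro h
    rcases List.mem_map.mp h with ⟨a, ha, rfl⟩
    rwa [C.rev_invol]
  · intro h
    exact List.mem_map.mpr ⟨C.rev e, h, C.rev_invol e⟩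

lemma nodup_of_pw {ρ : List C.E} (hp : C.PW ρ) : ρ.Nodup :=
  List.Pairwise.imp (fun h => h.1) hp

/-- telescoping along a path -/
lemma path_telescope (f : C.V → ℝ) (ρ : List C.E) : C.IsPath ρ → ∀ hne : ρ ≠ [],
    (ρ.map (fun e => f (C.tgt e) - f (C.tgt (C.rev e)))).sum
      = f (C.tgt (ρ.getLast hne)) - f (C.tgt (C.rev (ρ.head hne))) := by
  induction ρ with
  | nil => intro _ hne; exact absurd rfl hne
  | cons a t ih =>
    intro hp _
    cases t with
    | nil => simp
    | cons b t' =>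
      have hp' : C.IsPath (b :: t') := by
        intro i h
        have h2 : i + 1 + 1 < (a :: b :: t').length := by simpa using Nat.succ_lt_succ h
        have := hp (i + 1) h2
        simpa using this
      have ihh := ih hp' (by simp)
      have hab : C.tgt a = C.tgt (C.rev b) := by
        have := hp 0 (by simp)
        simpa using this
      have hlast : (a :: b :: t').getLast (by simp) = (b :: t').getLast (by simp) :=
        List.getLast_cons (by simp)
      rw [List.map_cons, List.sum_cons, ihh, hlast]
      simp only [List.head_cons, hab]
      ring

lemma list_sum_map_sub {α : Type*} (g1 g2 : α → ℝ) (l : List α) :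
    (l.map (fun e => g1 e - g2 e)).sum = (l.map g1).sum - (l.map g2).sum := by
  induction l with
  | nil => simp
  | cons a t ih => simp [ih]; ring

lemma sum_dual (ρ : List C.E) (hp : C.PW ρ) (F : C.E → ℝ) :
    ∑ e : C.E, F e * C.dualForm ρ (Sum.inl e)
      = (ρ.map F).sum - (ρ.map (fun e => F (C.rev e))).sum := by
  have key : ∀ e : C.E, F e * C.dualForm ρ (Sum.inl e)
      = (if e ∈ ρ.toFinset then F e else 0) - (if e ∈ (ρ.map C.rev).toFinset then F e else 0) := by
    intro e
    simp only [dualForm, List.mem_toFinset, C.mem_map_rev]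
    by_cases h1 : e ∈ ρ
    · have h2 : C.rev e ∉ ρ := C.not_rev_mem hp h1
      simp [h1, h2]
    · by_cases h2 : C.rev e ∈ ρ
      · simp [h1, h2]
      · simp [h1, h2]
  rw [Finset.sum_congr rfl (fun e _ => key e), Finset.sum_sub_distrib]
  have hn1 : ρ.Nodup := C.nodup_of_pw hp
  have hn2 : (ρ.map C.rev).Nodup := hn1.map C.rev_inj
  rw [Finset.sum_ite_mem, Finset.univ_inter, Finset.sum_ite_mem, Finset.univ_inter,
    List.sum_toFinset _ hn1, List.sum_toFinset _ hn2, List.map_map]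
  rfl

lemma dualForm_oneForm {ρ : List C.E} (hρ : C.IsSimpleLoop ρ) :
    C.IsOneForm (C.dualForm ρ) := by
  obtain ⟨⟨hpath, hclose⟩, hne, hpw⟩ := hρ
  constructor
  · intro e
    simp only [dualForm]
    by_cases h1 : e ∈ ρ
    · have h2 : C.rev e ∉ ρ := C.not_rev_mem hpw h1
      simp [h1, h2, C.rev_invol]
    · by_cases h2 : C.rev e ∈ ρ
      · simp [h1, h2]
      · simp [h1, h2, C.rev_invol]
  · intro p
    rw [Fintype.sum_sum_type]
    have hL : ∀ l : C.L, (if C.vert (Sum.inr l) = p then C.dualForm ρ (Sum.inr l) else 0) = 0 := by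
      intro l; simp [dualForm]
    rw [Finset.sum_congr rfl (fun l _ => hL l), Finset.sum_const_zero, add_zero]
    have hE : ∀ e : C.E, (if C.vert (Sum.inl e) = p then C.dualForm ρ (Sum.inl e) else 0)
        = (if C.tgt e = p then (1:ℝ) else 0) * C.dualForm ρ (Sum.inl e) := by
      intro e
      by_cases h : C.vert (Sum.inl e) = p
      · have h' : C.tgt e = p := h
        simp [h, h']
      · have h' : ¬ C.tgt e = p := h
        simp [h, h']
    rw [Finset.sum_congr rfl (fun e _ => hE e), C.sum_dual ρ hpw, ← list_sum_map_sub]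
    have := C.path_telescope (fun q => if q = p then (1:ℝ) else 0) ρ hpath hne
    rw [this, hclose hne]
    ring

lemma dualForm_mem_OmegaH {ρ : List C.E} (hρ : C.IsSimpleLoop ρ) :
    C.dualForm ρ ∈ C.OmegaH :=
  ⟨C.dualForm_oneForm hρ, fun _ => rfl⟩

lemma pathIntegral_eq_map_sum (ρ : List C.E) (w : C.E ⊕ C.L → ℝ) :
    C.pathIntegral ρ w = (ρ.map (fun e => C.len e * w (Sum.inl e))).sum := by
  rw [pathIntegral, ← Fin.sum_univ_fun_getElem ρ (fun e => C.len e * w (Sum.inl e))]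
  rfl

lemma pairing_dualForm (ρ : List C.E) (hpw : C.PW ρ) (w : C.E ⊕ C.L → ℝ)
    (hanti : ∀ e : C.E, w (Sum.inl (C.rev e)) = - w (Sum.inl e)) :
    C.pairing w (C.dualForm ρ) = C.pathIntegral ρ w := by
  have : ∀ e : C.E, C.len e * w (Sum.inl e) * C.dualForm ρ (Sum.inl e)
      = (fun e => C.len e * w (Sum.inl e)) e * C.dualForm ρ (Sum.inl e) := fun e => rfl
  rw [pairing, Finset.sum_congr rfl (fun e _ => this e), C.sum_dual ρ hpw,
    C.pathIntegral_eq_map_sum]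
  have hrev : (ρ.map (fun e => C.len (C.rev e) * w (Sum.inl (C.rev e)))).sum
      = - (ρ.map (fun e => C.len e * w (Sum.inl e))).sum := by
    have : (fun e => C.len (C.rev e) * w (Sum.inl (C.rev e)))
        = fun e => - (C.len e * w (Sum.inl e)) := by
      funext e; rw [C.len_rev, hanti]; ring
    rw [this]
    simpa [zero_sub] using list_sum_map_sub (fun _ => (0:ℝ)) (fun e => C.len e * w (Sum.inl e)) ρ
  rw [show (fun e => (fun e => C.len e * w (Sum.inl e)) (C.rev e))
      = (fun e => C.len (C.rev e) * w (Sum.inl (C.rev e))) from rfl, hrev]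
  ring

/-! ### Orientation -/

noncomputable def Ori : Finset C.E :=
  Finset.univ.filter
    (fun e => ((Fintype.equivFin C.E) e : ℕ) < ((Fintype.equivFin C.E) (C.rev e) : ℕ))

lemma mem_Ori_iff (e : C.E) :
    e ∈ C.Ori ↔ ((Fintype.equivFin C.E) e : ℕ) < ((Fintype.equivFin C.E) (C.rev e) : ℕ) := by
  simp [Ori]

lemma idx_ne (e : C.E) :
    ((Fintype.equivFin C.E) e : ℕ) ≠ ((Fintype.equivFin C.E) (C.rev e) : ℕ) :=
  fun h => C.rev_ne e ((Fintype.equivFin C.E).injective (Fin.val_injective h).symm)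

lemma rev_mem_Ori {e : C.E} (h : e ∉ C.Ori) : C.rev e ∈ C.Ori := by
  rw [mem_Ori_iff] at h ⊢
  rw [C.rev_invol]
  have := C.idx_ne e
  omega

lemma not_rev_mem_Ori {e : C.E} (h : e ∈ C.Ori) : C.rev e ∉ C.Ori := by
  rw [mem_Ori_iff] at h ⊢
  rw [C.rev_invol]
  omega

lemma image_rev_Ori : C.Ori.image C.rev = C.Oriᶜ := by
  ext f
  simp only [Finset.mem_image, Finset.mem_compl]
  constructor
  · rintro ⟨a, ha, rfl⟩
    exact C.not_rev_mem_Ori ha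
  · intro hf
    exact ⟨C.rev f, C.rev_mem_Ori hf, C.rev_invol f⟩

lemma card_Ori : 2 * C.Ori.card = Fintype.card C.E := by
  have h1 : (C.Ori.image C.rev).card = C.Ori.card :=
    Finset.card_image_of_injective _ C.rev_inj
  have h2 := Finset.card_add_card_compl C.Ori
  rw [← C.image_rev_Ori, h1] at h2
  omega

/-! ### The incidence matrix on oriented edges -/

noncomputable def mat : Matrix C.V {e // e ∈ C.Ori} ℝ :=
  fun p e => (if C.tgt e.1 = p then 1 else 0) - (if C.tgt (C.rev e.1) = p then 1 else 0)

lemma matT_apply (f : C.V → ℝ) (e : {e // e ∈ C.Ori}) :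
    C.mat.transpose.mulVecLin f e = f (C.tgt e.1) - f (C.tgt (C.rev e.1)) := by
  simp only [Matrix.mulVecLin_apply, Matrix.mulVec, dotProduct, Matrix.transpose_apply,
    mat, sub_mul, Finset.sum_sub_distrib, ite_mul, one_mul, zero_mul]
  rw [Finset.sum_ite_eq, Finset.sum_ite_eq]
  simp

lemma const_one_ne_zero [Nonempty C.V] : (fun _ => (1:ℝ) : C.V → ℝ) ≠ 0 := by
  intro h
  have := congrFun h (Classical.arbitrary C.V)
  simp at this

lemma ker_matT_eq (hconn : C.Connected) [Nonempty C.V] :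
    LinearMap.ker C.mat.transpose.mulVecLin = Submodule.span ℝ {(fun _ => (1:ℝ) : C.V → ℝ)} := by
  apply le_antisymm
  · intro f hf
    rw [LinearMap.mem_ker] at hf
    have hedge : ∀ e : C.E, f (C.tgt e) = f (C.tgt (C.rev e)) := by
      intro e
      by_cases h : e ∈ C.Ori
      · have := congrFun hf ⟨e, h⟩
        rw [C.matT_apply] at this
        simp only [Pi.zero_apply] at this
        linarith
      · have := congrFun hf ⟨C.rev e, C.rev_mem_Ori h⟩
        rw [C.matT_apply] at this
        simp only [Pi.zero_apply, C.rev_invol] at this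
        linarith
    have hconst : ∀ p q : C.V, f p = f q := by
      intro p q
      rcases hconn p q with h | ⟨ρ, hne, hpath, hp, hq⟩
      · rw [h]
      · have htel := C.path_telescope f ρ hpath hne
        have hzero : (ρ.map (fun e => f (C.tgt e) - f (C.tgt (C.rev e)))).sum = 0 := by
          apply List.sum_eq_zero
          intro x hx
          rcases List.mem_map.mp hx with ⟨e, _, rfl⟩
          rw [hedge e]; ring
        rw [hzero] at htel
        rw [← hp, ← hq]
        linarith
    have : f = (f (Classical.arbitrary C.V)) • (fun _ => (1:ℝ)) := by
      funext q
      simp [hconst q (Classical.arbitrary C.V)]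
    rw [this]
    exact Submodule.smul_mem _ _ (Submodule.mem_span_singleton_self _)
  · rw [Submodule.span_le, Set.singleton_subset_iff]
    rw [SetLike.mem_coe, LinearMap.mem_ker]
    funext e
    rw [C.matT_apply]
    simp

lemma finrank_ker_mat (hconn : C.Connected) [Nonempty C.V] :
    Module.finrank ℝ (LinearMap.ker C.mat.mulVecLin) + Fintype.card C.V
      = C.Ori.card + 1 := by
  have h1 := LinearMap.finrank_range_add_finrank_ker C.mat.mulVecLin
  have h2 := LinearMap.finrank_range_add_finrank_ker C.mat.transpose.mulVecLin
  have h3 : C.mat.transpose.rank = C.mat.rank := Matrix.rank_transpose _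
  rw [Matrix.rank, Matrix.rank] at h3
  rw [Module.finrank_fintype_fun_eq_card, Fintype.card_coe] at h1
  rw [Module.finrank_fintype_fun_eq_card] at h2
  rw [C.ker_matT_eq hconn] at h2
  have h4 : Module.finrank ℝ
      (Submodule.span ℝ {(fun _ => (1:ℝ) : C.V → ℝ)}) = 1 :=
    finrank_span_singleton C.const_one_ne_zero
  omega

/-! ### Restriction of holomorphic forms -/

lemma holo_balance {w : C.E ⊕ C.L → ℝ} (hw : C.IsHolo w) (p : C.V) :
    ∑ e : C.E, (if C.tgt e = p then w (Sum.inl e) else 0) = 0 := by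
  have hb := hw.1.2 p
  rw [Fintype.sum_sum_type] at hb
  have hL : ∀ l : C.L, (if C.vert (Sum.inr l) = p then w (Sum.inr l) else 0) = 0 := by
    intro l
    rw [hw.2 l]
    simp
  rw [Finset.sum_congr rfl (fun l _ => hL l), Finset.sum_const_zero, add_zero] at hb
  exact hb

lemma mat_mulVec_restrict {w : C.E ⊕ C.L → ℝ} (hw : C.IsHolo w) :
    C.mat.mulVecLin (fun e : {e // e ∈ C.Ori} => w (Sum.inl e.1)) = 0 := by
  funext p
  have hanti := hw.1.1
  simp only [Matrix.mulVecLin_apply, Matrix.mulVec, dotProduct, mat, Pi.zero_apply]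
  have key : ∀ e : {e // e ∈ C.Ori},
      ((if C.tgt e.1 = p then (1:ℝ) else 0) - (if C.tgt (C.rev e.1) = p then 1 else 0))
        * w (Sum.inl e.1)
      = (if C.tgt e.1 = p then w (Sum.inl e.1) else 0)
        + (if C.tgt (C.rev e.1) = p then w (Sum.inl (C.rev e.1)) else 0) := by
    intro e
    rw [hanti e.1]
    by_cases h1 : C.tgt e.1 = p <;> by_cases h2 : C.tgt (C.rev e.1) = p <;>
      simp [h1, h2]
  rw [Finset.sum_congr rfl (fun e _ => key e), Finset.sum_add_distrib]
  set G : C.E → ℝ := fun e => if C.tgt e = p then w (Sum.inl e) else 0 with hG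
  have e1 : ∑ e : {e // e ∈ C.Ori}, (if C.tgt e.1 = p then w (Sum.inl e.1) else 0)
      = ∑ e ∈ C.Ori, G e := by
    rw [← Finset.sum_coe_sort C.Ori G]
  have e2 : ∑ e : {e // e ∈ C.Ori}, (if C.tgt (C.rev e.1) = p then w (Sum.inl (C.rev e.1)) else 0)
      = ∑ e ∈ C.Oriᶜ, G e := by
    have h1 : ∑ e : {e // e ∈ C.Ori}, (if C.tgt (C.rev e.1) = p then w (Sum.inl (C.rev e.1)) else 0)
        = ∑ e ∈ C.Ori, G (C.rev e) := Finset.sum_coe_sort C.Ori (fun e => G (C.rev e))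
    have h2 : ∑ e ∈ C.Oriᶜ, G e = ∑ e ∈ C.Ori, G (C.rev e) := by
      rw [← C.image_rev_Ori]
      exact Finset.sum_image (fun a _ b _ h => C.rev_inj h)
    rw [h1, h2]
  rw [e1, e2, Finset.sum_add_sum_compl C.Ori G]
  exact C.holo_balance hw p

/-- The restriction map `Ω_H → ker(mat)` as a linear map. -/
noncomputable def restrictMap :
    C.OmegaH →ₗ[ℝ] (LinearMap.ker C.mat.mulVecLin) where
  toFun w := ⟨fun e => (w : C.E ⊕ C.L → ℝ) (Sum.inl e.1),
    LinearMap.mem_ker.mpr (C.mat_mulVec_restrict w.2)⟩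
  map_add' w u := by ext e; rfl
  map_smul' c w := by ext e; rfl

lemma restrictMap_injective : Function.Injective C.restrictMap := by
  intro w u h
  have hval : ∀ e : {e // e ∈ C.Ori},
      (w : C.E ⊕ C.L → ℝ) (Sum.inl e.1) = (u : C.E ⊕ C.L → ℝ) (Sum.inl e.1) :=
    fun e => congrFun (congrArg Subtype.val h) e
  apply Subtype.ext
  funext x
  match x with
  | Sum.inl e =>
    by_cases he : e ∈ C.Ori
    · exact hval ⟨e, he⟩
    · have h1 := hval ⟨C.rev e, C.rev_mem_Ori he⟩
      have h2 := w.2.1.1 e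
      have h3 := u.2.1.1 e
      simp only at h1
      rw [h2, h3] at h1
      linarith
  | Sum.inr l => rw [w.2.2 l, u.2.2 l]

lemma finrank_OmegaH_le (hconn : C.Connected) [Nonempty C.V] :
    Module.finrank ℝ C.OmegaH + Fintype.card C.V ≤ C.Ori.card + 1 := by
  have h1 : Module.finrank ℝ C.OmegaH
      ≤ Module.finrank ℝ (LinearMap.ker C.mat.mulVecLin) :=
    LinearMap.finrank_le_finrank_of_injective C.restrictMap_injective
  have h2 := C.finrank_ker_mat hconn
  omega

end TropCurve

/-- Let `C = (G, ℓ)` be a tropical curve with connected graph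
`G` of genus `g` (encoded by `2g + 2|V| = |E| + 2`), and let `b₁, …, b_g` be
simple loops whose dual 1-forms are linearly independent. Then
`w^{b₁}, …, w^{b_g}` form a basis of `Ω_H(C)`, and the period map
`Ω_H(C) → ℝ^g`, `w ↦ (∫_{b₁} w, …, ∫_{b_g} w)`, is a linear isomorphism. -/
theorem dualForms_basis_and_period_map_iso (C : TropCurve) (hconn : C.Connected)
    (g : ℕ) (hg : 2 * g + 2 * Fintype.card C.V = Fintype.card C.E + 2)
    (b : Fin g → List C.E) (hb : ∀ i, C.IsSimpleLoop (b i))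
    (hind : LinearIndependent ℝ fun i => C.dualForm (b i)) :
    (∀ i, C.dualForm (b i) ∈ C.OmegaH) ∧
    (∃ B : Module.Basis (Fin g) ℝ ↥C.OmegaH,
      ∀ i, (B i : C.E ⊕ C.L → ℝ) = C.dualForm (b i)) ∧
    (∃ φ : ↥C.OmegaH ≃ₗ[ℝ] (Fin g → ℝ),
      ∀ (w : ↥C.OmegaH) (i : Fin g),
        φ w i = C.pathIntegral (b i) (w : C.E ⊕ C.L → ℝ)) := by
  classical
  -- the vertex set is nonempty
  have hVne : Nonempty C.V := by
    rcases isEmpty_or_nonempty C.V with hV | hV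
    · exfalso
      have hEempty : IsEmpty C.E := Function.isEmpty C.tgt
      have hcV : Fintype.card C.V = 0 := Fintype.card_eq_zero
      have hcE : Fintype.card C.E = 0 := Fintype.card_eq_zero
      rw [hcV, hcE] at hg
      have hg1 : 0 < g := by omega
      obtain ⟨_, hne, _⟩ := hb ⟨0, hg1⟩
      cases hl : b ⟨0, hg1⟩ with
      | nil => exact hne hl
      | cons a t => exact hEempty.false a
    · exact hV
  have hmem : ∀ i, C.dualForm (b i) ∈ C.OmegaH := fun i => C.dualForm_mem_OmegaH (hb i)
  set v : Fin g → C.OmegaH := fun i => ⟨C.dualForm (b i), hmem i⟩ with hv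
  have hli : LinearIndependent ℝ v :=
    LinearIndependent.of_comp C.OmegaH.subtype hind
  have hfin_le : Module.finrank ℝ C.OmegaH ≤ g := by
    have h1 := C.finrank_OmegaH_le hconn
    have h2 := C.card_Ori
    omega
  have hfin_ge : g ≤ Module.finrank ℝ C.OmegaH := by
    simpa using hli.fintype_card_le_finrank
  have hfr : Module.finrank ℝ C.OmegaH = g := le_antisymm hfin_le hfin_ge
  -- the basis
  have hBex : ∃ B : Module.Basis (Fin g) ℝ C.OmegaH, ∀ i, B i = v i := by
    rcases Nat.eq_zero_or_pos g with hg0 | hgpos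
    · subst hg0
      have hss : Subsingleton C.OmegaH := by
        have h0 := finrank_zero_iff_forall_zero.mp hfr
        exact ⟨fun a c => by rw [h0 a, h0 c]⟩
      exact ⟨Module.Basis.empty _, fun i => i.elim0⟩
    · have : Nonempty (Fin g) := Fin.pos_iff_nonempty.mp hgpos
      refine ⟨basisOfLinearIndependentOfCardEqFinrank hli (by simp [hfr]), fun i => ?_⟩
      rw [coe_basisOfLinearIndependentOfCardEqFinrank]
  obtain ⟨B, hB⟩ := hBex
  have hBval : ∀ i, (B i : C.E ⊕ C.L → ℝ) = C.dualForm (b i) := fun i => by rw [hB i]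
  refine ⟨hmem, ⟨B, hBval⟩, ?_⟩
  -- the period map
  let P : C.OmegaH →ₗ[ℝ] (Fin g → ℝ) :=
  { toFun := fun w => fun i => C.pathIntegral (b i) (w : C.E ⊕ C.L → ℝ)
    map_add' := fun w u => by
      funext i
      show C.pathIntegral (b i) ((w + u : C.OmegaH) : C.E ⊕ C.L → ℝ)
          = C.pathIntegral (b i) (w : C.E ⊕ C.L → ℝ)
            + C.pathIntegral (b i) (u : C.E ⊕ C.L → ℝ)
      rw [Submodule.coe_add, C.pathIntegral_add]
    map_smul' := fun c w => by
      funext i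
      show C.pathIntegral (b i) ((c • w : C.OmegaH) : C.E ⊕ C.L → ℝ)
          = c * C.pathIntegral (b i) (w : C.E ⊕ C.L → ℝ)
      rw [Submodule.coe_smul, C.pathIntegral_smul] }
  have hinj : Function.Injective P := by
    rw [← LinearMap.ker_eq_bot, LinearMap.ker_eq_bot']
    intro w hw
    set u : C.E ⊕ C.L → ℝ := (w : C.E ⊕ C.L → ℝ) with hu
    have hanti : ∀ e : C.E, u (Sum.inl (C.rev e)) = - u (Sum.inl e) := w.2.1.1
    let Pr : (C.E ⊕ C.L → ℝ) →ₗ[ℝ] ℝ :=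
    { toFun := fun x => C.pairing u x
      map_add' := fun x y => by
        simp only [TropCurve.pairing, Pi.add_apply, mul_add, Finset.sum_add_distrib]
      map_smul' := fun c x => by
        simp only [TropCurve.pairing, Pi.smul_apply, smul_eq_mul, RingHom.id_apply]
        have h : ∀ e : C.E, C.len e * u (Sum.inl e) * (c * x (Sum.inl e))
            = c * (C.len e * u (Sum.inl e) * x (Sum.inl e)) := fun e => by ring
        rw [Finset.sum_congr rfl (fun e _ => h e), ← Finset.mul_sum]
        ring }
    have hper : ∀ i, Pr (C.dualForm (b i)) = 0 := by
      intro i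
      show C.pairing u (C.dualForm (b i)) = 0
      rw [C.pairing_dualForm (b i) (hb i).2.2 u hanti]
      exact congrFun hw i
    have hval : u = ∑ i, (B.repr w i) • C.dualForm (b i) := by
      have h1 : w = ∑ i, (B.repr w i) • B i := (B.sum_repr w).symm
      calc u = ((∑ i, (B.repr w i) • B i : C.OmegaH) : C.E ⊕ C.L → ℝ) := by
              rw [← h1]
        _ = ∑ i, (B.repr w i) • ((B i : C.OmegaH) : C.E ⊕ C.L → ℝ) := by
              push_cast
              rfl
        _ = ∑ i, (B.repr w i) • C.dualForm (b i) := by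
              refine Finset.sum_congr rfl fun i _ => ?_
              rw [hBval i]
    have hpu : C.pairing u u = 0 := by
      calc C.pairing u u = Pr u := rfl
        _ = Pr (∑ i, (B.repr w i) • C.dualForm (b i)) := by rw [← hval]
        _ = ∑ i, (B.repr w i) • Pr (C.dualForm (b i)) := by
              rw [map_sum]
              exact Finset.sum_congr rfl fun i _ => by rw [map_smul]
        _ = 0 := by simp [hper]
    have hsum : ∑ e : C.E, C.len e * u (Sum.inl e) * u (Sum.inl e) = 0 := by
      have : C.pairing u u
          = (1 / 2) * ∑ e : C.E, C.len e * u (Sum.inl e) * u (Sum.inl e) := rfl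
      rw [this] at hpu
      linarith
    have hterm : ∀ e : C.E, C.len e * u (Sum.inl e) * u (Sum.inl e) = 0 := by
      intro e
      have hnn : ∀ e ∈ Finset.univ, (0:ℝ) ≤ C.len e * u (Sum.inl e) * u (Sum.inl e) := by
        intro e _
        rw [mul_assoc]
        exact mul_nonneg (C.len_pos e).le (mul_self_nonneg _)
      exact (Finset.sum_eq_zero_iff_of_nonneg hnn).mp hsum e (Finset.mem_univ e)
    have hE0 : ∀ e : C.E, u (Sum.inl e) = 0 := by
      intro e
      have h1 : C.len e * (u (Sum.inl e) * u (Sum.inl e)) = 0 := by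
        rw [← mul_assoc]; exact hterm e
      rcases mul_eq_zero.mp h1 with h | h
      · exact absurd h (C.len_pos e).ne'
      · exact mul_self_eq_zero.mp h
    apply Subtype.ext
    funext x
    match x with
    | Sum.inl e => exact hE0 e
    | Sum.inr l => exact w.2.2 l
  have hfr2 : Module.finrank ℝ C.OmegaH = Module.finrank ℝ (Fin g → ℝ) := by
    rw [hfr, Module.finrank_fintype_fun_eq_card, Fintype.card_fin]
  refine ⟨P.linearEquivOfInjective hinj hfr2, fun w i => ?_⟩
  rw [LinearMap.linearEquivOfInjective_apply]
  rfl
end
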